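/- The number of sequences over {1,-1} of length n whose every prefix sum is nonnegative and which end in a maximal block of exactly k entries -1 (preceded by a 1, for 0 ≤ k ≤ n−2), decomposes the total count a_n of weighted sequences so that a_n = a_{n-1} + Σ_{k=1}^{n-2} 4k · a_{n-1-k} + 4(n-1) + 4n, where weights assign 4h per maximal (-1)-block of length h. -/

import Mathlib

/-!
Classify the sequences by their leading block of `-1`'s (the mirror image of the
terminal-block decomposition). Let `b(h, n)` be the total weight of the sequences `(-1)^h J`
with `J` of length `n`. The first entry of `J` gives `b(h, n+1) = w(h) a_n + b(h+1, n)`,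
with `w(0) = 1` and `w(h) = 4h` otherwise, because a `1` closes the current block.
Unrolling from `h = 1` gives `b(1, n) = Σ_{k<n} 4(1+k) a_{n-1-k} + 4(n+1)`, and
`a_{n+1} = b(0, n+1) = a_n + b(1, n)`.
-/

/-- The weight of a ±1 sequence: the product of `4h` over the lengths `h` of the
maximal blocks of `-1`'s (equal to 1 if no `-1` occurs). -/
def gweight (l : List ℤ) : ℕ :=
  ((l.splitOn 1).map (fun b => if b.length = 0 then 1 else 4 * b.length)).prod

/-- `aseq n` is the sum of the weights `gweight I` over all `I ∈ {1,-1}^n`. -/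
def aseq (n : ℕ) : ℕ :=
  ∑ f : Fin n → Bool, gweight (List.ofFn fun i => if f i then (1 : ℤ) else -1)

def signs {n : ℕ} (f : Fin n → Bool) : List ℤ :=
  List.ofFn fun i => if f i then 1 else -1

def runWeight (h : ℕ) : ℕ :=
  if h = 0 then 1 else 4 * h

theorem gweight_replicate (h : ℕ) : gweight (List.replicate h (-1)) = runWeight h := by
  rw [gweight, List.splitOn, List.splitOnP_eq_singleton (by simp)]
  simp [runWeight]

theorem gweight_replicate_append_cons_one (h : ℕ) (l : List ℤ) :
    gweight (List.replicate h (-1) ++ 1 :: l) = runWeight h * gweight l := by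
  rw [gweight, List.splitOn, List.splitOnP_append_cons_of_forall_mem (by simp) 1 (by simp)]
  simp [gweight, runWeight, List.splitOn]

theorem aseq_eq_sum_signs (n : ℕ) : aseq n = ∑ f : Fin n → Bool, gweight (signs f) := rfl

theorem aseq_zero : aseq 0 = 1 := by
  simp [aseq, gweight]

theorem sum_signs_succ {M : Type*} [AddCommMonoid M] (n : ℕ) (F : List ℤ → M) :
    ∑ f : Fin (n + 1) → Bool, F (signs f)
      = ∑ f : Fin n → Bool, F (1 :: signs f) + ∑ f : Fin n → Bool, F (-1 :: signs f) := by
  rw [← (Fin.consEquiv fun _ => Bool).sum_comp, Fintype.sum_prod_type, Fintype.sum_bool]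
  simp [signs, Fin.consEquiv, List.ofFn_succ]

def negRunSum (h n : ℕ) : ℕ :=
  ∑ f : Fin n → Bool, gweight (List.replicate h (-1) ++ signs f)

theorem negRunSum_zero_left (n : ℕ) : negRunSum 0 n = aseq n := rfl

theorem negRunSum_zero_right (h : ℕ) : negRunSum h 0 = runWeight h := by
  simp [negRunSum, signs, gweight_replicate]

theorem negRunSum_succ (h n : ℕ) :
    negRunSum h (n + 1) = runWeight h * aseq n + negRunSum (h + 1) n := by
  rw [negRunSum, sum_signs_succ n fun l => gweight (List.replicate h (-1) ++ l),
    aseq_eq_sum_signs, Finset.mul_sum]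
  simp only [gweight_replicate_append_cons_one, List.replicate_succ', List.append_assoc,
    List.singleton_append, negRunSum]

theorem aseq_succ (n : ℕ) : aseq (n + 1) = aseq n + negRunSum 1 n := by
  rw [← negRunSum_zero_left, negRunSum_succ, runWeight, if_pos rfl, one_mul]

theorem negRunSum_eq {h : ℕ} (hh : 0 < h) (n : ℕ) :
    negRunSum h n = ∑ k ∈ Finset.range n, 4 * (h + k) * aseq (n - 1 - k) + 4 * (h + n) := by
  induction n generalizing h with
  | zero => simp [negRunSum_zero_right, runWeight, hh.ne']
  | succ n ih =>
    rw [negRunSum_succ, ih (by omega : 0 < h + 1), Finset.sum_range_succ', runWeight,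
      if_neg hh.ne']
    simp only [Nat.add_sub_cancel, Nat.sub_zero, add_zero, Nat.sub_sub, add_assoc, add_comm 1]
    ring

/-- Classifying sequences by the length of their terminal block of `-1`'s yields
`a_n = a_{n-1} + Σ_{k=1}^{n-2} 4k·a_{n-1-k} + 4(n-1) + 4n`. -/
theorem stmt_18 (n : ℕ) (hn : 2 ≤ n) :
    aseq n = aseq (n - 1) + (∑ k ∈ Finset.Icc 1 (n - 2), 4 * k * aseq (n - 1 - k))
             + 4 * (n - 1) + 4 * n := by
  obtain ⟨m, rfl⟩ : ∃ m, n = m + 2 := ⟨n - 2, by omega⟩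
  have reindex : ∑ k ∈ Finset.Icc 1 m, 4 * k * aseq (m + 1 - k)
      = ∑ k ∈ Finset.range m, 4 * (1 + k) * aseq (m - k) := by
    rw [← Finset.Ico_add_one_right_eq_Icc, Finset.sum_Ico_eq_sum_range, Nat.add_sub_cancel]
    refine Finset.sum_congr rfl fun k _ => ?_
    rw [Nat.add_comm 1, Nat.add_sub_add_right]
  rw [show m + 2 - 1 = m + 1 by omega, show m + 2 - 2 = m by omega, reindex, aseq_succ,
    negRunSum_eq one_pos, Finset.sum_range_succ]
  simp only [Nat.add_sub_cancel, Nat.sub_self, aseq_zero]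
  ring
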